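/- arXiv:2501.10259 — 4 statements merged into one kernel-verified Lean document; each statement's English description precedes it below -/
import Mathlib

section
/- Let G be a group, N a normal subgroup with quotient Q = G/N. Suppose X ⊆ N is a finite monoid generating set for N with language L₁ ⊆ X* whose evaluations are exactly N \ {1} and no word of L₁ evaluates to 1; suppose Y ⊆ G is finite, the images of Y generate Q as a monoid, and L₂ ⊆ Y* is a language such that no word of L₂ evaluates to an element of N and every element of G whose image in Q is non-trivial is N-equivalent to some evaluation of a word in L₂ (i.e. the evaluations of L₂ hit every non-trivial coset of N). Then L' = L₁ ∪ L₂ ∪ L₁L₂ is a language over X ∪ Y such that no word of L' evaluates to 1 in G and every non-identity element of G is the evaluation of some word of L'. -/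
/-!
A word of `L₁` evaluates into `N \ {1}` and a word of `L₂` outside `N`, so a product `n * m` with
`n ∈ N`, `m ∉ N` is never `1`. Conversely, an element of `N \ {1}` is read by `L₁`; an element
`g ∉ N` has a coset representative `m` read by `L₂`, and `g = (g m⁻¹) m` with `g m⁻¹ ∈ N`, so `g` is
read by `L₂` when `g m⁻¹ = 1` and by `L₁ L₂` otherwise.
-/

namespace Subgroup

variable {G : Type*} [Group G]

theorem mul_ne_one_of_mem_of_notMem {N : Subgroup G} {n m : G} (hn : n ∈ N) (hm : m ∉ N) :
    n * m ≠ 1 := fun h ↦ hm (eq_inv_of_mul_eq_one_right h ▸ N.inv_mem hn)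

end Subgroup

section ExtensionLanguage

variable {G X Y : Type*} [Group G]

def extensionLanguage (L₁ : Set (List X)) (L₂ : Set (List Y)) : Set (List (X ⊕ Y)) :=
  (List.map Sum.inl '' L₁) ∪ (List.map Sum.inr '' L₂) ∪
    {w | ∃ u ∈ L₁, ∃ v ∈ L₂, w = u.map Sum.inl ++ v.map Sum.inr}

@[simp]
theorem prod_map_sumElim_map_inl (f : X → G) (g : Y → G) (u : List X) :
    ((u.map Sum.inl).map (Sum.elim f g)).prod = (u.map f).prod := by
  simp only [List.map_map, Sum.elim_comp_inl]

@[simp]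
theorem prod_map_sumElim_map_inr (f : X → G) (g : Y → G) (v : List Y) :
    ((v.map Sum.inr).map (Sum.elim f g)).prod = (v.map g).prod := by
  simp only [List.map_map, Sum.elim_comp_inr]

theorem prod_map_sumElim_ne_one_of_mem_extensionLanguage {N : Subgroup G}
    {ιX : X → G} (hXN : ∀ x, ιX x ∈ N) {ιY : Y → G}
    {L₁ : Set (List X)} (hL₁ : ∀ u ∈ L₁, (u.map ιX).prod ≠ 1)
    {L₂ : Set (List Y)} (hL₂ : ∀ v ∈ L₂, (v.map ιY).prod ∉ N) :
    ∀ w ∈ extensionLanguage L₁ L₂, (w.map (Sum.elim ιX ιY)).prod ≠ 1 := by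
  rintro w ((⟨u, hu, rfl⟩ | ⟨v, hv, rfl⟩) | ⟨u, hu, v, hv, rfl⟩)
  · simpa using hL₁ u hu
  · simpa using N.mul_ne_one_of_mem_of_notMem N.one_mem (hL₂ v hv)
  · have hu : (u.map ιX).prod ∈ N := list_prod_mem (by simp [hXN])
    simpa using N.mul_ne_one_of_mem_of_notMem hu (hL₂ v hv)

theorem exists_mem_extensionLanguage_prod_map_sumElim_eq {N : Subgroup G} [N.Normal]
    {ιX : X → G} {ιY : Y → G}
    {L₁ : Set (List X)} (hL₁ : ∀ n ∈ N, n ≠ 1 → ∃ u ∈ L₁, (u.map ιX).prod = n)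
    {L₂ : Set (List Y)} (hL₂ : ∀ g ∉ N, ∃ v ∈ L₂, ((v.map ιY).prod)⁻¹ * g ∈ N)
    {g : G} (hg : g ≠ 1) :
    ∃ w ∈ extensionLanguage L₁ L₂, (w.map (Sum.elim ιX ιY)).prod = g := by
  by_cases hgN : g ∈ N
  · obtain ⟨u, hu, rfl⟩ := hL₁ g hgN hg
    exact ⟨u.map Sum.inl, Or.inl (Or.inl ⟨u, hu, rfl⟩), by simp⟩
  obtain ⟨v, hv, hcoset⟩ := hL₂ g hgN
  set m := (v.map ιY).prod with hm
  have hn : g * m⁻¹ ∈ N := ‹N.Normal›.mem_comm hcoset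
  by_cases hn1 : g * m⁻¹ = 1
  · refine ⟨v.map Sum.inr, Or.inl (Or.inr ⟨v, hv, rfl⟩), ?_⟩
    simpa [← hm] using (mul_inv_eq_one.mp hn1).symm
  obtain ⟨u, hu, hu_eq⟩ := hL₁ _ hn hn1
  refine ⟨u.map Sum.inl ++ v.map Sum.inr, Or.inr ⟨u, hu, v, hv, rfl⟩, ?_⟩
  simp [hu_eq, ← hm]

end ExtensionLanguage

theorem stmt_4_general {G : Type*} [Group G] (N : Subgroup G) [N.Normal]
    {X Y : Type*}
    (ιX : X → G) (hXN : ∀ x, ιX x ∈ N)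
    (ιY : Y → G)
    (L₁ : Set (List X))
    (hL₁a : ∀ w ∈ L₁, (w.map ιX).prod ≠ 1)
    (hL₁b : ∀ n : G, n ∈ N → n ≠ 1 → ∃ w ∈ L₁, (w.map ιX).prod = n)
    (L₂ : Set (List Y))
    (hL₂a : ∀ w ∈ L₂, (w.map ιY).prod ∉ N)
    (hL₂b : ∀ g : G, g ∉ N → ∃ w ∈ L₂, ((w.map ιY).prod)⁻¹ * g ∈ N) :
    (∀ w ∈ ((List.map Sum.inl '' L₁) ∪ (List.map Sum.inr '' L₂) ∪
        {w : List (X ⊕ Y) | ∃ u ∈ L₁, ∃ v ∈ L₂, w = u.map Sum.inl ++ v.map Sum.inr}),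
      (w.map (Sum.elim ιX ιY)).prod ≠ 1) ∧
    (∀ g : G, g ≠ 1 →
      ∃ w ∈ ((List.map Sum.inl '' L₁) ∪ (List.map Sum.inr '' L₂) ∪
        {w : List (X ⊕ Y) | ∃ u ∈ L₁, ∃ v ∈ L₂, w = u.map Sum.inl ++ v.map Sum.inr}),
      (w.map (Sum.elim ιX ιY)).prod = g) :=
  ⟨prod_map_sumElim_ne_one_of_mem_extensionLanguage hXN hL₁a hL₂a,
    fun _ hg ↦ exists_mem_extensionLanguage_prod_map_sumElim_eq hL₁b hL₂b hg⟩

/-- epiC is closed under extensions: the language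
`L₁ ∪ L₂ ∪ L₁L₂` works for an extension of `N` by `Q = G/N`. -/
theorem stmt_4 {G : Type*} [Group G] (N : Subgroup G) [N.Normal]
    {X Y : Type*} [Fintype X] [Fintype Y]
    (ιX : X → G) (hXN : ∀ x, ιX x ∈ N)
    (hXgen : Submonoid.closure (Set.range ιX) = N.toSubmonoid)
    (ιY : Y → G)
    (L₁ : Set (List X))
    (hL₁a : ∀ w ∈ L₁, (w.map ιX).prod ≠ 1)
    (hL₁b : ∀ n : G, n ∈ N → n ≠ 1 → ∃ w ∈ L₁, (w.map ιX).prod = n)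
    (L₂ : Set (List Y))
    (hL₂a : ∀ w ∈ L₂, (w.map ιY).prod ∉ N)
    (hL₂b : ∀ g : G, g ∉ N → ∃ w ∈ L₂, ((w.map ιY).prod)⁻¹ * g ∈ N) :
    (∀ w ∈ ((List.map Sum.inl '' L₁) ∪ (List.map Sum.inr '' L₂) ∪
        {w : List (X ⊕ Y) | ∃ u ∈ L₁, ∃ v ∈ L₂, w = u.map Sum.inl ++ v.map Sum.inr}),
      (w.map (Sum.elim ιX ιY)).prod ≠ 1) ∧
    (∀ g : G, g ≠ 1 →
      ∃ w ∈ ((List.map Sum.inl '' L₁) ∪ (List.map Sum.inr '' L₂) ∪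
        {w : List (X ⊕ Y) | ∃ u ∈ L₁, ∃ v ∈ L₂, w = u.map Sum.inl ++ v.map Sum.inr}),
      (w.map (Sum.elim ιX ιY)).prod = g) :=
  stmt_4_general N ιX hXN ιY L₁ hL₁a hL₁b L₂ hL₂a hL₂b
end

section
/- Let G be a group and H ≤ G a subgroup of finite index, with transversal T ∋ 1 of the right cosets (so every g ∈ G is uniquely h·t with h ∈ H, t ∈ T). If X ⊆ H is a finite monoid generating set for H and L ⊆ X* is a language whose set of evaluations is exactly H \ {1}, then the language L ∪ (T \ {1}) ∪ L·(T \ {1}) over the alphabet X ∪ (T \ {1}) has set of evaluations exactly G \ {1}. -/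
/-! Write `g = h * t` with `h ∈ H`, `t ∈ T`. By uniqueness of the decomposition, `g = 1` exactly
when `h = 1` and `t = 1`, so `G \ {1}` is the union of the cases `t = 1 ≠ h`, `h = 1 ≠ t` and
`h ≠ 1 ≠ t`, which are the evaluation sets of `L`, `T \ {1}` and `L·(T \ {1})`. -/

open scoped Pointwise

namespace Subgroup.IsComplement

variable {G : Type*} [Group G] {S T : Set G}

theorem mul_eq_one_iff (hST : IsComplement S T) (hS1 : 1 ∈ S) (hT1 : 1 ∈ T) {s t : G}
    (hs : s ∈ S) (ht : t ∈ T) : s * t = 1 ↔ s = 1 ∧ t = 1 := by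
  refine ⟨fun h ↦ ?_, fun ⟨hs, ht⟩ ↦ by rw [hs, ht, one_mul]⟩
  have := @hST.1 (⟨s, hs⟩, ⟨t, ht⟩) (⟨1, hS1⟩, ⟨1, hT1⟩) (by simpa using h)
  simpa [Prod.ext_iff] using this

theorem compl_one_eq (hST : IsComplement S T) (hS1 : 1 ∈ S) (hT1 : 1 ∈ T) :
    ({1}ᶜ : Set G) = S \ {1} ∪ T \ {1} ∪ (S \ {1}) * (T \ {1}) := by
  ext g
  constructor
  · intro hg
    obtain ⟨⟨⟨s, hs⟩, ⟨t, ht⟩⟩, rfl⟩ := hST.2 g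
    change s * t ≠ 1 at hg
    change s * t ∈ _
    by_cases hs1 : s = 1
    · subst hs1
      rw [one_mul] at hg ⊢
      exact .inl (.inr ⟨ht, hg⟩)
    by_cases ht1 : t = 1
    · subst ht1
      rw [mul_one]
      exact .inl (.inl ⟨hs, hs1⟩)
    exact .inr (Set.mul_mem_mul ⟨hs, hs1⟩ ⟨ht, ht1⟩)
  · rintro ((⟨-, hg⟩ | ⟨-, hg⟩) | ⟨s, ⟨hs, hs1⟩, t, ⟨ht, -⟩, rfl⟩)
    · exact hg
    · exact hg
    · exact fun h ↦ hs1 ((hST.mul_eq_one_iff hS1 hT1 hs ht).1 h).1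

end Subgroup.IsComplement

theorem setOf_prod_map_sumElim_eq_union_mul {α β M : Type*} [Monoid M] (f : α → M) (e : β → M)
    (L : Set (List α)) :
    {m : M | ∃ w ∈ List.map Sum.inl '' L ∪ {w | ∃ b, w = [Sum.inr b]} ∪
        {w | ∃ u ∈ L, ∃ b, w = u.map Sum.inl ++ [Sum.inr b]}, (w.map (Sum.elim f e)).prod = m} =
      {m | ∃ u ∈ L, (u.map f).prod = m} ∪ Set.range e ∪
        {m | ∃ u ∈ L, (u.map f).prod = m} * Set.range e := by
  ext m
  constructor
  · rintro ⟨w, ((⟨u, hu, rfl⟩ | ⟨b, rfl⟩) | ⟨u, hu, b, rfl⟩), rfl⟩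
    · exact .inl (.inl ⟨u, hu, by simp [List.map_map]⟩)
    · exact .inl (.inr ⟨b, by simp⟩)
    · exact .inr ⟨_, ⟨u, hu, rfl⟩, _, ⟨b, rfl⟩, by simp [List.map_map]⟩
  · rintro ((⟨u, hu, rfl⟩ | ⟨b, rfl⟩) | ⟨_, ⟨u, hu, rfl⟩, _, ⟨b, rfl⟩, rfl⟩)
    · exact ⟨u.map Sum.inl, .inl (.inl ⟨u, hu, rfl⟩), by simp [List.map_map]⟩
    · exact ⟨[Sum.inr b], .inl (.inr ⟨b, rfl⟩), by simp⟩
    · exact ⟨u.map Sum.inl ++ [Sum.inr b], .inr ⟨u, hu, b, rfl⟩, by simp [List.map_map]⟩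

theorem range_coe_ne_one_eq_diff {G : Type*} [One G] (T : Set G) :
    Set.range (fun t : {t : T // (t : G) ≠ 1} ↦ (t.1 : G)) = T \ {1} := by
  ext g; simp [and_comm]

theorem stmt_6_general {G : Type*} [Group G] (H : Subgroup G)
    (T : Set G) (hT1 : (1 : G) ∈ T)
    (hT : ∀ g : G, ∃! p : H × T, g = (p.1 : G) * (p.2 : G))
    {X : Type*} (ιX : X → G)
    (L : Set (List X))
    (hL : {g : G | ∃ w ∈ L, (w.map ιX).prod = g} = {g : G | g ∈ H ∧ g ≠ 1}) :
    {g : G | ∃ w ∈ ((List.map Sum.inl '' L) ∪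
        {w : List (X ⊕ {t : T // (t : G) ≠ 1}) | ∃ t : {t : T // (t : G) ≠ 1}, w = [Sum.inr t]} ∪
        {w : List (X ⊕ {t : T // (t : G) ≠ 1}) |
          ∃ u ∈ L, ∃ t : {t : T // (t : G) ≠ 1}, w = u.map Sum.inl ++ [Sum.inr t]}),
      (w.map (Sum.elim ιX (fun t : {t : T // (t : G) ≠ 1} => ((t.1 : G))))).prod = g} = {g : G | g ≠ 1} := by
  have hHT : Subgroup.IsComplement (H : Set G) T :=
    Subgroup.isComplement_iff_existsUnique.2 fun g ↦
      let ⟨p, hp, hpu⟩ := hT g; ⟨p, hp.symm, fun q hq ↦ hpu q hq.symm⟩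
  rw [setOf_prod_map_sumElim_eq_union_mul, hL, range_coe_ne_one_eq_diff]
  exact (hHT.compl_one_eq H.one_mem hT1).symm

/-- epiC passes to finite index overgroups: with `T ∋ 1` a transversal
for the right cosets of `H`, the language `L ∪ (T \ {1}) ∪ L·(T \ {1})` over the
alphabet `X ⊕ (T \ {1})` has evaluation set exactly `G \ {1}`. -/
theorem stmt_6 {G : Type*} [Group G] (H : Subgroup G) [H.FiniteIndex]
    (T : Set G) (hT1 : (1 : G) ∈ T)
    (hT : ∀ g : G, ∃! p : H × T, g = (p.1 : G) * (p.2 : G))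
    {X : Type*} [Fintype X] (ιX : X → G) (hXH : ∀ x, ιX x ∈ H)
    (hXgen : Submonoid.closure (Set.range ιX) = H.toSubmonoid)
    (L : Set (List X))
    (hL : {g : G | ∃ w ∈ L, (w.map ιX).prod = g} = {g : G | g ∈ H ∧ g ≠ 1}) :
    {g : G | ∃ w ∈ ((List.map Sum.inl '' L) ∪
        {w : List (X ⊕ {t : T // (t : G) ≠ 1}) | ∃ t : {t : T // (t : G) ≠ 1}, w = [Sum.inr t]} ∪
        {w : List (X ⊕ {t : T // (t : G) ≠ 1}) |
          ∃ u ∈ L, ∃ t : {t : T // (t : G) ≠ 1}, w = u.map Sum.inl ++ [Sum.inr t]}),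
      (w.map (Sum.elim ιX (fun t : {t : T // (t : G) ≠ 1} => ((t.1 : G))))).prod = g} = {g : G | g ≠ 1} :=
  stmt_6_general H T hT1 hT ιX L hL
end

section
/- Define on the set Γ₀' = (⊕_{i∈ℤ} ℤ) × (⊕_{i∈ℤ, i>0} ℤ) (finitely supported integer sequences) the operation ((aᵢ),(bᵢ)) · ((cᵢ),(dᵢ)) = ((aᵢ + cᵢ), (bᵢ + dᵢ + Σ_{l−k=i} a_l c_k)). Then this operation is associative, has identity (0,0), and every element has an inverse given by ((aᵢ),(bᵢ))⁻¹ = ((−aᵢ), (Σ_{l−k=i} a_l a_k − bᵢ)); hence Γ₀' is a group. -/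
/-- Positive integers, the index set for the second coordinate. -/
abbrev PosZ : Type := {i : ℤ // 0 < i}

/-- The carrier `Γ₀' = (⊕_{i∈ℤ} ℤ) × (⊕_{i>0} ℤ)` of finitely supported sequences. -/
abbrev Gamma0' : Type := (ℤ →₀ ℤ) × (PosZ →₀ ℤ)

/-- The cross term `(Σ_{l−k=i} a_l c_k)_{i>0}`, as a finitely supported sequence. -/
noncomputable def cross (a c : ℤ →₀ ℤ) : PosZ →₀ ℤ :=
  Finsupp.onFinset
    (((a.support ×ˢ c.support).image fun p => p.1 - p.2).subtype fun i => 0 < i)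
    (fun i => ∑ l ∈ a.support, a l * c (l - i.val))
    (by
      intro i hi
      rw [Finset.mem_subtype]
      obtain ⟨l, hl, hne⟩ := Finset.exists_ne_zero_of_sum_ne_zero hi
      have hc : c (l - i.val) ≠ 0 := fun h => hne (by simp [h])
      exact Finset.mem_image.2 ⟨(l, l - i.val),
        Finset.mem_product.2 ⟨hl, Finsupp.mem_support_iff.2 hc⟩, by ring⟩)

/-- The operation `((aᵢ),(bᵢ)) · ((cᵢ),(dᵢ)) = ((aᵢ+cᵢ), (bᵢ+dᵢ+Σ_{l−k=i} a_l c_k))`. -/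
noncomputable def gmul (x y : Gamma0') : Gamma0' := (x.1 + y.1, x.2 + y.2 + cross x.1 y.1)

/-- The identity element `(0,0)`. -/
noncomputable def gone : Gamma0' := (0, 0)

/-- The proposed inverse `((aᵢ),(bᵢ))⁻¹ = ((−aᵢ), (Σ_{l−k=i} a_l a_k − bᵢ))`. -/
noncomputable def ginv (x : Gamma0') : Gamma0' := (-x.1, cross x.1 x.1 - x.2)

/-!
`Γ₀'` is the extension of `⊕_ℤ ℤ` by `⊕_{i>0} ℤ` defined by the 2-cocycle `cross`. Any
biadditive map `β : A → A → B` is a 2-cocycle, and the twisted product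
`(a, b) · (c, d) = (a + c, b + d + β a c)` is a group law with identity `(0, 0)` and inverse
`(-a, β a a - b)`: associativity is the identity `β (a + c) e + β a c = β a (c + e) + β c e`
of biadditive maps. So it suffices to check that `cross` is biadditive.
-/

namespace TwistedProd

variable {A B : Type*}

section Monoid

variable [AddCommMonoid A] [AddCommMonoid B] (β : A →+ A →+ B)

def mul (x y : A × B) : A × B := (x.1 + y.1, x.2 + y.2 + β x.1 y.1)

theorem mul_assoc (x y z : A × B) : mul β (mul β x y) z = mul β x (mul β y z) := by
  simp only [mul, map_add, AddMonoidHom.add_apply, Prod.mk.injEq]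
  exact ⟨add_assoc _ _ _, by abel⟩

theorem zero_mul (x : A × B) : mul β 0 x = x := by
  simp [mul]

theorem mul_zero (x : A × B) : mul β x 0 = x := by
  simp [mul]

end Monoid

section Group

variable [AddCommGroup A] [AddCommGroup B] (β : A →+ A →+ B)

def inv (x : A × B) : A × B := (-x.1, β x.1 x.1 - x.2)

theorem mul_inv (x : A × B) : mul β x (inv β x) = 0 := by
  simp only [mul, inv, map_neg, Prod.mk_eq_zero]
  exact ⟨add_neg_cancel _, by abel⟩

theorem inv_mul (x : A × B) : mul β (inv β x) x = 0 := by
  simp only [mul, inv, map_neg, AddMonoidHom.neg_apply, Prod.mk_eq_zero]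
  exact ⟨neg_add_cancel _, by abel⟩

end Group

end TwistedProd

theorem cross_apply_eq_sum (a c : ℤ →₀ ℤ) (i : PosZ) :
    cross a c i = a.sum fun l x => x * c (l - i) :=
  Finsupp.onFinset_apply ..

theorem cross_add_left (a b c : ℤ →₀ ℤ) : cross (a + b) c = cross a c + cross b c := by
  ext i
  simp only [Finsupp.add_apply, cross_apply_eq_sum]
  exact Finsupp.sum_add_index' (fun _ => zero_mul _) fun _ _ _ => add_mul _ _ _

theorem cross_add_right (a c d : ℤ →₀ ℤ) : cross a (c + d) = cross a c + cross a d := by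
  ext i
  simp only [Finsupp.add_apply, cross_apply_eq_sum, mul_add]
  exact Finsupp.sum_add

noncomputable def crossHom : (ℤ →₀ ℤ) →+ (ℤ →₀ ℤ) →+ (PosZ →₀ ℤ) :=
  AddMonoidHom.mk' (fun a => AddMonoidHom.mk' (cross a) (cross_add_right a))
    fun a b => AddMonoidHom.ext (cross_add_left a b)

/-- the operation on `Γ₀'` is associative, has identity `(0,0)`, and
every element has the stated inverse; hence `Γ₀'` is a group. -/
theorem stmt_10 :
    (∀ x y z : Gamma0', gmul (gmul x y) z = gmul x (gmul y z)) ∧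
    (∀ x : Gamma0', gmul gone x = x ∧ gmul x gone = x) ∧
    (∀ x : Gamma0', gmul x (ginv x) = gone ∧ gmul (ginv x) x = gone) :=
  ⟨TwistedProd.mul_assoc crossHom,
    fun x => ⟨TwistedProd.zero_mul crossHom x, TwistedProd.mul_zero crossHom x⟩,
    fun x => ⟨TwistedProd.mul_inv crossHom x, TwistedProd.inv_mul crossHom x⟩⟩
end

section
/- If a class of groups contains the trivial group and each group of a family (G_v)_{v ∈ V} for a finite index set V, and the class epiC is defined via languages closed under finite unions and concatenation, then the direct product of two epiC groups is epiC: if L₁ ⊆ X* has evaluation set G \ {1} and L₂ ⊆ Y* has evaluation set H \ {1} (with no words evaluating to the identity), then L₁ ∪ L₂ ∪ L₁L₂, viewed over the alphabet (X×{1}) ∪ ({1}×Y) inside G × H, contains no word evaluating to (1,1) and its evaluation set is exactly (G × H) \ {(1,1)}. -/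
/-!
Identify `x ∈ X` with `(x, 1)` and `y ∈ Y` with `(1, y)`. A word of `L₁`, of `L₂` or of `L₁L₂`
then evaluates to `(g, 1)`, `(1, h)` or `(g, h)` respectively, with `g ≠ 1` and `h ≠ 1` ranging
over all nontrivial elements; these three kinds exhaust the nontrivial elements of `G × H`.
-/

section ProductLanguage

variable {G H X Y : Type*} [Monoid G] [Monoid H] (f : X → G) (g : Y → H)

/-- `L₁ ∪ L₂ ∪ L₁L₂`, with `X ⊕ Y` standing for the alphabet `(X × {1}) ∪ ({1} × Y)`. -/
def productLanguage (L₁ : Set (List X)) (L₂ : Set (List Y)) : Set (List (X ⊕ Y)) :=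
  List.map Sum.inl '' L₁ ∪ List.map Sum.inr '' L₂ ∪
    {w | ∃ u ∈ L₁, ∃ v ∈ L₂, w = u.map Sum.inl ++ v.map Sum.inr}

def sumEval : X ⊕ Y → G × H :=
  Sum.elim (fun x => (f x, 1)) (fun y => (1, g y))

theorem prod_map_sumEval_inl (u : List X) :
    ((u.map Sum.inl).map (sumEval f g)).prod = ((u.map f).prod, 1) := by
  have : sumEval f g ∘ Sum.inl = MonoidHom.inl G H ∘ f := rfl
  rw [List.map_map, this, ← List.map_map, ← map_list_prod]
  rfl

theorem prod_map_sumEval_inr (v : List Y) :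
    ((v.map Sum.inr).map (sumEval f g)).prod = (1, (v.map g).prod) := by
  have : sumEval f g ∘ Sum.inr = MonoidHom.inr G H ∘ g := rfl
  rw [List.map_map, this, ← List.map_map, ← map_list_prod]
  rfl

theorem prod_map_sumEval_inl_append_inr (u : List X) (v : List Y) :
    ((u.map Sum.inl ++ v.map Sum.inr).map (sumEval f g)).prod =
      ((u.map f).prod, (v.map g).prod) := by
  rw [List.map_append, List.prod_append, prod_map_sumEval_inl, prod_map_sumEval_inr,
    Prod.mk_mul_mk, mul_one, one_mul]

theorem exists_mem_productLanguage_prod_eq_iff (L₁ : Set (List X)) (L₂ : Set (List Y))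
    (p : G × H) :
    (∃ w ∈ productLanguage L₁ L₂, (w.map (sumEval f g)).prod = p) ↔
      ((∃ u ∈ L₁, (u.map f).prod = p.1) ∧ p.2 = 1) ∨
      (p.1 = 1 ∧ ∃ v ∈ L₂, (v.map g).prod = p.2) ∨
      ((∃ u ∈ L₁, (u.map f).prod = p.1) ∧ ∃ v ∈ L₂, (v.map g).prod = p.2) := by
  constructor
  · rintro ⟨w, ((⟨u, hu, rfl⟩ | ⟨v, hv, rfl⟩) | ⟨u, hu, v, hv, rfl⟩), rfl⟩
    · rw [prod_map_sumEval_inl]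
      exact .inl ⟨⟨u, hu, rfl⟩, rfl⟩
    · rw [prod_map_sumEval_inr]
      exact .inr (.inl ⟨rfl, v, hv, rfl⟩)
    · rw [prod_map_sumEval_inl_append_inr]
      exact .inr (.inr ⟨⟨u, hu, rfl⟩, v, hv, rfl⟩)
  · rintro (⟨⟨u, hu, ha⟩, hb⟩ | ⟨ha, v, hv, hb⟩ | ⟨⟨u, hu, ha⟩, v, hv, hb⟩)
    · exact ⟨u.map Sum.inl, .inl (.inl ⟨u, hu, rfl⟩),
        (prod_map_sumEval_inl f g u).trans (Prod.ext ha hb.symm)⟩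
    · exact ⟨v.map Sum.inr, .inl (.inr ⟨v, hv, rfl⟩),
        (prod_map_sumEval_inr f g v).trans (Prod.ext ha.symm hb)⟩
    · exact ⟨_, .inr ⟨u, hu, v, hv, rfl⟩,
        (prod_map_sumEval_inl_append_inr f g u v).trans (Prod.ext ha hb)⟩

theorem exists_mem_prod_eq_iff_ne_one {L : Set (List X)}
    (hL : ∀ w ∈ L, (w.map f).prod ≠ 1) (hL' : ∀ a : G, a ≠ 1 → ∃ w ∈ L, (w.map f).prod = a)
    (a : G) : (∃ w ∈ L, (w.map f).prod = a) ↔ a ≠ 1 :=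
  ⟨fun ⟨w, hw, hwa⟩ => hwa ▸ hL w hw, hL' a⟩

theorem setOf_prod_productLanguage_eq {L₁ : Set (List X)} {L₂ : Set (List Y)}
    (hL₁a : ∀ w ∈ L₁, (w.map f).prod ≠ 1) (hL₁b : ∀ a : G, a ≠ 1 → ∃ w ∈ L₁, (w.map f).prod = a)
    (hL₂a : ∀ w ∈ L₂, (w.map g).prod ≠ 1) (hL₂b : ∀ b : H, b ≠ 1 → ∃ w ∈ L₂, (w.map g).prod = b) :
    {p : G × H | ∃ w ∈ productLanguage L₁ L₂, (w.map (sumEval f g)).prod = p} = {p | p ≠ 1} := by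
  ext p
  rw [Set.mem_ofPred_eq, Set.mem_ofPred_eq, exists_mem_productLanguage_prod_eq_iff,
    exists_mem_prod_eq_iff_ne_one f hL₁a hL₁b, exists_mem_prod_eq_iff_ne_one g hL₂a hL₂b]
  simp only [Ne, Prod.ext_iff, Prod.fst_one, Prod.snd_one]
  tauto

end ProductLanguage

theorem stmt_18_general {G H : Type*} [Group G] [Group H]
    {X Y : Type*}
    (ιX : X → G) (ιY : Y → H)
    (L₁ : Set (List X))
    (hL₁a : ∀ w ∈ L₁, (w.map ιX).prod ≠ 1)
    (hL₁b : ∀ g : G, g ≠ 1 → ∃ w ∈ L₁, (w.map ιX).prod = g)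
    (L₂ : Set (List Y))
    (hL₂a : ∀ w ∈ L₂, (w.map ιY).prod ≠ 1)
    (hL₂b : ∀ h : H, h ≠ 1 → ∃ w ∈ L₂, (w.map ιY).prod = h) :
    (∀ w ∈ ((List.map Sum.inl '' L₁) ∪ (List.map Sum.inr '' L₂) ∪
        {w : List (X ⊕ Y) | ∃ u ∈ L₁, ∃ v ∈ L₂, w = u.map Sum.inl ++ v.map Sum.inr}),
      (w.map (Sum.elim (fun x => ((ιX x, 1) : G × H)) (fun y => ((1, ιY y) : G × H)))).prod
        ≠ 1) ∧
    {p : G × H | ∃ w ∈ ((List.map Sum.inl '' L₁) ∪ (List.map Sum.inr '' L₂) ∪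
        {w : List (X ⊕ Y) | ∃ u ∈ L₁, ∃ v ∈ L₂, w = u.map Sum.inl ++ v.map Sum.inr}),
      (w.map (Sum.elim (fun x => ((ιX x, 1) : G × H)) (fun y => ((1, ιY y) : G × H)))).prod
        = p} = {p : G × H | p ≠ 1} := by
  have hset := setOf_prod_productLanguage_eq ιX ιY hL₁a hL₁b hL₂a hL₂b
  exact ⟨fun w hw => hset.subset ⟨w, hw, rfl⟩, hset⟩

/-- the direct product of two epiC groups is epiC: over the alphabet
`(X×{1}) ∪ ({1}×Y)` inside `G × H`, the language `L₁ ∪ L₂ ∪ L₁L₂` contains no word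
evaluating to `(1,1)` and its evaluation set is exactly `(G × H) \ {(1,1)}`. -/
theorem stmt_18 {G H : Type*} [Group G] [Group H]
    {X Y : Type*} [Fintype X] [Fintype Y]
    (ιX : X → G) (ιY : Y → H)
    (hXgen : Submonoid.closure (Set.range ιX) = ⊤)
    (hYgen : Submonoid.closure (Set.range ιY) = ⊤)
    (L₁ : Set (List X))
    (hL₁a : ∀ w ∈ L₁, (w.map ιX).prod ≠ 1)
    (hL₁b : ∀ g : G, g ≠ 1 → ∃ w ∈ L₁, (w.map ιX).prod = g)
    (L₂ : Set (List Y))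
    (hL₂a : ∀ w ∈ L₂, (w.map ιY).prod ≠ 1)
    (hL₂b : ∀ h : H, h ≠ 1 → ∃ w ∈ L₂, (w.map ιY).prod = h) :
    (∀ w ∈ ((List.map Sum.inl '' L₁) ∪ (List.map Sum.inr '' L₂) ∪
        {w : List (X ⊕ Y) | ∃ u ∈ L₁, ∃ v ∈ L₂, w = u.map Sum.inl ++ v.map Sum.inr}),
      (w.map (Sum.elim (fun x => ((ιX x, 1) : G × H)) (fun y => ((1, ιY y) : G × H)))).prod
        ≠ 1) ∧
    {p : G × H | ∃ w ∈ ((List.map Sum.inl '' L₁) ∪ (List.map Sum.inr '' L₂) ∪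
        {w : List (X ⊕ Y) | ∃ u ∈ L₁, ∃ v ∈ L₂, w = u.map Sum.inl ++ v.map Sum.inr}),
      (w.map (Sum.elim (fun x => ((ιX x, 1) : G × H)) (fun y => ((1, ιY y) : G × H)))).prod
        = p} = {p : G × H | p ≠ 1} :=
  stmt_18_general ιX ιY L₁ hL₁a hL₁b L₂ hL₂a hL₂b
end
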